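/- Let n be a positive integer and c > 0 a real number with log n + c < n. Then n · (1 − (log n + c)/n)^{n−1} ≥ exp(−c) · exp(−(log n + c)²/(n − (log n + c))). -/

import Mathlib

/-!
With `L = log n + c`, the bound `log (1 - x) ≥ -x / (1 - x)` at `x = L / n` gives
`n (1 - L/n)^(n-1) ≥ exp (log n - (n - 1) L / (n - L))`, and this exponent exceeds
`-c - L² / (n - L)` by exactly `L / (n - L) ≥ 0`.
-/

open Real

lemma exp_neg_div_sub_le_one_sub_div {t n : ℝ} (hn : 0 < n) (ht : t < n) :
    exp (-(t / (n - t))) ≤ 1 - t / n := by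
  have hpos : 0 < 1 - t / n := by rw [sub_pos, div_lt_one hn]; exact ht
  have hnt : n - t ≠ 0 := (sub_pos.mpr ht).ne'
  rw [← le_log_iff_exp_le hpos]
  calc -(t / (n - t)) = 1 - (1 - t / n)⁻¹ := by field_simp; ring
    _ ≤ log (1 - t / n) := one_sub_inv_le_log_of_pos hpos

theorem isolated_lower_bound_general (n : ℕ) (c : ℝ) (hc : 0 < c)
    (h : Real.log n + c < n) :
    Real.exp (-c) * Real.exp (-(Real.log n + c) ^ 2 / ((n : ℝ) - (Real.log n + c))) ≤
      (n : ℝ) * (1 - (Real.log n + c) / (n : ℝ)) ^ (n - 1) := by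
  set L := log n + c with hL_def
  have hL : 0 < L := add_pos_of_nonneg_of_pos (log_natCast_nonneg n) hc
  have hnL : 0 < (n : ℝ) - L := sub_pos.mpr h
  have hn_pos : (0 : ℝ) < n := hL.trans h
  have hexponent : -c + -L ^ 2 / (n - L) ≤ log n + ((n - 1 : ℕ) : ℝ) * -(L / (n - L)) := by
    have hgap :
        log n + ((n : ℝ) - 1) * -(L / (n - L)) - (-c + -L ^ 2 / (n - L)) = L / (n - L) := by
      rw [show log n = L - c by rw [hL_def]; ring]
      field_simp
      ring
    rw [Nat.cast_pred (Nat.cast_pos.mp hn_pos)]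
    linarith [div_pos hL hnL]
  calc exp (-c) * exp (-L ^ 2 / (n - L)) = exp (-c + -L ^ 2 / (n - L)) := (exp_add _ _).symm
    _ ≤ exp (log n + ((n - 1 : ℕ) : ℝ) * -(L / (n - L))) := exp_le_exp.mpr hexponent
    _ = n * exp (-(L / (n - L))) ^ (n - 1) := by rw [exp_add, exp_log hn_pos, exp_nat_mul]
    _ ≤ n * (1 - L / n) ^ (n - 1) := by
      gcongr
      exact exp_neg_div_sub_le_one_sub_div hn_pos h

theorem isolated_lower_bound (n : ℕ) (hn : 0 < n) (c : ℝ) (hc : 0 < c)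
    (h : Real.log n + c < n) :
    Real.exp (-c) * Real.exp (-(Real.log n + c) ^ 2 / ((n : ℝ) - (Real.log n + c))) ≤
      (n : ℝ) * (1 - (Real.log n + c) / (n : ℝ)) ^ (n - 1) :=
  isolated_lower_bound_general n c hc h
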